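/- Let A be a unital ring and N ⊆ A a subring containing the unit. Let S^• be a cochain complex of left A-modules that is semijective, i.e. (1) S^• is K-injective as a complex of left N-modules: for every acyclic cochain complex C^• of left N-modules the hom-complex hom_N^•(C^•, S^•) is acyclic; and (2) S^• is K-projective relative to N: for every cochain complex C^• of left A-modules that is homotopy equivalent to the zero complex as a complex of left N-modules, the hom-complex hom_A^•(S^•, C^•) is acyclic. If S^• is acyclic, then the identity map of S^• is null-homotopic through A-linear homotopies, i.e. S^• is homotopy equivalent to the zero complex as a complex of left A-modules. -/

import Mathlib

open CategoryTheory

/-- The hom-complex `hom_R^•(K, L)` (degree-`n` component `∏_p Hom_R(K^p, L^{p+n})`,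
differential `d f = d_L ∘ f − (−1)^n f ∘ d_K`) is acyclic. -/
def HomComplexAcyclic {R : Type} [Ring R] (K L : CochainComplex (ModuleCat R) ℤ) : Prop :=
  ∀ (n : ℤ) (z : CochainComplex.HomComplex.Cochain K L n),
    CochainComplex.HomComplex.δ n (n + 1) z = 0 →
      ∃ w : CochainComplex.HomComplex.Cochain K L (n - 1),
        CochainComplex.HomComplex.δ (n - 1) n w = z

variable (A : Type) [Ring A] (N : Subring A)

/-- The restriction of a complex of left `A`-modules to a complex of left `N`-modules. -/
noncomputable def restrictCpx (C : CochainComplex (ModuleCat A) ℤ) :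
    CochainComplex (ModuleCat N) ℤ :=
  ((ModuleCat.restrictScalars N.subtype).mapHomologicalComplex (ComplexShape.up ℤ)).obj C

/-- A complex of left `A`-modules is homotopy equivalent to the zero complex as a complex of
left `N`-modules. -/
def NullHomotopicOverSubring (C : CochainComplex (ModuleCat A) ℤ) : Prop :=
  Nonempty (Homotopy (𝟙 (restrictCpx A N C)) 0)

/-- `S` is K-injective as a complex of left `N`-modules. -/
def KInjectiveOverSubring (S : CochainComplex (ModuleCat A) ℤ) : Prop :=
  ∀ C : CochainComplex (ModuleCat N) ℤ, (∀ n : ℤ, C.ExactAt n) →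
    HomComplexAcyclic C (restrictCpx A N S)

/-- `S` is K-projective relative to `N`. -/
def RelativelyKProjective (S : CochainComplex (ModuleCat A) ℤ) : Prop :=
  ∀ C : CochainComplex (ModuleCat A) ℤ, NullHomotopicOverSubring A N C →
    HomComplexAcyclic S C

open CategoryTheory.Limits CochainComplex.HomComplex

/-! A chain map `f : K ⟶ L` is a degree-`0` cocycle of `hom^•(K, L)` and a primitive of it is a
null-homotopy, so acyclicity of a hom-complex makes every chain map null-homotopic.
Restriction of scalars is exact, so `S` is acyclic over `N` and K-injectivity makes
`hom_N^•(S, S)` acyclic: `𝟙 S` is null-homotopic over `N`. This is the hypothesis of relative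
K-projectivity for `C = S`, so `hom_A^•(S, S)` is acyclic and `𝟙 S` is null-homotopic over `A`. -/

lemma HomComplexAcyclic.nonempty_homotopy_zero {R : Type} [Ring R]
    {K L : CochainComplex (ModuleCat R) ℤ} (h : HomComplexAcyclic K L) (f : K ⟶ L) :
    Nonempty (Homotopy f 0) := by
  obtain ⟨w, hw⟩ := h 0 (Cochain.ofHom f) (by simp)
  exact ⟨(Cochain.equivHomotopy _ _).symm ⟨w, by simpa using hw.symm⟩⟩

universe v

namespace ModuleCat

variable {R R' : Type*} [Ring R] [Ring R'] (f : R →+* R')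

-- Limits and colimits of modules are computed on the underlying abelian groups.
instance restrictScalars_preservesFiniteLimits :
    PreservesFiniteLimits (restrictScalars.{v} f) :=
  ⟨fun _ _ _ ↦ { preservesLimit := inferInstance }⟩

instance restrictScalars_preservesFiniteColimits :
    PreservesFiniteColimits (restrictScalars.{v} f) :=
  ⟨fun _ _ _ ↦ { preservesColimit := inferInstance }⟩

end ModuleCat

lemma restrictCpx_exactAt {S : CochainComplex (ModuleCat A) ℤ} {n : ℤ} (h : S.ExactAt n) :
    (restrictCpx A N S).ExactAt n :=
  h.map (ModuleCat.restrictScalars N.subtype)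

/-- An acyclic semijective complex of left `A`-modules is homotopy equivalent to the zero
complex as a complex of left `A`-modules: its identity map is null-homotopic through
`A`-linear homotopies. -/
theorem acyclic_semijective_is_null_homotopic
    (S : CochainComplex (ModuleCat A) ℤ)
    (hKinj : KInjectiveOverSubring A N S)
    (hKproj : RelativelyKProjective A N S)
    (hacyclic : ∀ n : ℤ, S.ExactAt n) :
    Nonempty (Homotopy (𝟙 S) 0) := by
  have hS_N : ∀ n, (restrictCpx A N S).ExactAt n := fun n ↦ restrictCpx_exactAt A N (hacyclic n)
  have hnull : NullHomotopicOverSubring A N S := (hKinj _ hS_N).nonempty_homotopy_zero _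
  exact (hKproj S hnull).nonempty_homotopy_zero _
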